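/- Let K be a compact convex set such that LAff(K) is an inf-semilattice. Then addition distributes over infima in LAff(K): for all f, g, h ∈ LAff(K), f + (g ∧ h) = (f + g) ∧ (f + h). -/

import Mathlib

/-!
The inequality `f + (g ⊓ h) ≤ (f + g) ⊓ (f + h)` holds because `f + (g ⊓ h)` lies in `LAff(K)`
below both `f + g` and `f + h`. For the reverse inequality two facts suffice.

The order of `LAff(K)` is detected on the extreme points: by Hahn–Banach separation from the
epigraph, `u ∈ LAff(K)` is the supremum of its continuous affine minorants `k`, and if `u ≤ v` on
`ext K` then `v - k ∈ LAff(K)` is nonnegative on `ext K`, hence on `K` by Bauer's minimum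
principle (the set where an lsc affine function attains its minimum is a compact face of `K`, which
contains an extreme point by Krein–Milman).

Infima are pointwise on the extreme points: if `k₁ ≤ g` and `k₂ ≤ h` are continuous affine with
`k₁ x₀, k₂ x₀ > s` at an extreme point `x₀`, then the compact convex hull of the graphs of `k₁, k₂`
over `K`, raised by the upward vertical ray, stays above height `s` over `x₀`. Separating `(x₀, s)`
from it gives a continuous affine `k ≤ g, h` with `k x₀ > s`, so `m x₀ ≥ min (g x₀) (h x₀)`.
On `ext K` this gives `(f + g) ⊓ (f + h) ≤ f + min g h ≤ f + m`.
-/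

/-- Membership in `LAff(K)`: lower semicontinuous affine functions
`K → (-∞, ∞]`, modeled inside `EReal`. -/
def IsLAffOn {E : Type*} [AddCommGroup E] [Module ℝ E] [TopologicalSpace E]
    (K : Set E) (f : E → EReal) : Prop :=
  LowerSemicontinuousOn f K ∧ (∀ x ∈ K, f x ≠ ⊥) ∧
    ∀ x ∈ K, ∀ y ∈ K, ∀ t : ℝ, 0 ≤ t → t ≤ 1 →
      f (t • x + (1 - t) • y) = (t : EReal) * f x + ((1 - t : ℝ) : EReal) * f y

/-- `m` is the infimum of `f` and `g` in `LAff(K)` with the pointwise order. -/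
def IsLAffInf {E : Type*} [AddCommGroup E] [Module ℝ E] [TopologicalSpace E]
    (K : Set E) (f g m : E → EReal) : Prop :=
  IsLAffOn K m ∧ (∀ x ∈ K, m x ≤ f x) ∧ (∀ x ∈ K, m x ≤ g x) ∧
    ∀ h : E → EReal, IsLAffOn K h → (∀ x ∈ K, h x ≤ f x) →
      (∀ x ∈ K, h x ≤ g x) → ∀ x ∈ K, h x ≤ m x

open Set
open scoped Pointwise

theorem EReal.le_of_mul_add_mul_le {a b : ℝ} (ha : 0 < a) (hb : 0 ≤ b) (hab : a + b = 1)
    {x y c : EReal} (hc_top : c ≠ ⊤) (hc_bot : c ≠ ⊥) (hy : c ≤ y)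
    (h : (a : EReal) * x + (b : EReal) * y ≤ c) : x ≤ c := by
  lift c to ℝ using ⟨hc_top, hc_bot⟩
  have hby : ((b * c : ℝ) : EReal) ≤ (b : EReal) * y := by
    rw [EReal.coe_mul]; exact mul_le_mul_of_nonneg_left hy (by exact_mod_cast hb)
  have h' := (add_le_add_right hby _).trans h
  induction x with
  | bot => exact bot_le
  | top =>
    rw [EReal.coe_mul_top_of_pos ha, EReal.top_add_coe] at h'
    exact (EReal.coe_ne_top c (top_le_iff.1 h')).elim
  | coe x =>
    rw [← EReal.coe_mul, ← EReal.coe_add, EReal.coe_le_coe_iff] at h'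
    refine EReal.coe_le_coe_iff.2 (le_of_not_gt fun (hcx : c < x) => ?_)
    obtain rfl : b = 1 - a := by linarith
    nlinarith [mul_pos ha (sub_pos_of_lt hcx)]

theorem LowerSemicontinuousOn.exists_coe_le {α : Type*} [TopologicalSpace α] {K : Set α}
    {p : α → EReal} (hK : IsCompact K) (hp : LowerSemicontinuousOn p K)
    (hp_bot : ∀ x ∈ K, p x ≠ ⊥) : ∃ b : ℝ, ∀ x ∈ K, (b : EReal) ≤ p x := by
  rcases K.eq_empty_or_nonempty with rfl | hne
  · exact ⟨0, by simp⟩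
  obtain ⟨y, hy, hmin⟩ := hp.exists_isMinOn hne hK
  exact ⟨(p y).toReal, fun x hx => (EReal.coe_toReal_le (hp_bot y hy)).trans (hmin hx)⟩

section
variable {E : Type*} [AddCommGroup E] [Module ℝ E] [TopologicalSpace E] {K : Set E}

theorem IsLAffOn.add {f g : E → EReal} (hf : IsLAffOn K f) (hg : IsLAffOn K g) :
    IsLAffOn K fun x => f x + g x := by
  obtain ⟨hf_lsc, hf_bot, hf_aff⟩ := hf
  obtain ⟨hg_lsc, hg_bot, hg_aff⟩ := hg
  refine ⟨hf_lsc.add' hg_lsc fun x hx =>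
      EReal.continuousAt_add (Or.inr (hg_bot x hx)) (Or.inl (hf_bot x hx)),
    fun x hx => EReal.add_ne_bot_iff.2 ⟨hf_bot x hx, hg_bot x hx⟩,
    fun x hx y hy t ht₀ ht₁ => ?_⟩
  dsimp only
  rw [hf_aff x hx y hy t ht₀ ht₁, hg_aff x hx y hy t ht₀ ht₁,
    EReal.left_distrib_of_nonneg_of_ne_top (by exact_mod_cast ht₀) (EReal.coe_ne_top _),
    EReal.left_distrib_of_nonneg_of_ne_top (by exact_mod_cast sub_nonneg.2 ht₁)
      (EReal.coe_ne_top _)]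
  exact add_add_add_comm _ _ _ _

theorem isLAffOn_coe_add_const (φ : StrongDual ℝ E) (c : ℝ) :
    IsLAffOn K fun x => ((φ x + c : ℝ) : EReal) := by
  refine ⟨(continuous_coe_real_ereal.comp (by fun_prop)).lowerSemicontinuous
    |>.lowerSemicontinuousOn _, fun x _ => EReal.coe_ne_bot _, fun x _ y _ t _ _ => ?_⟩
  simp only [map_add, map_smul, smul_eq_mul, ← EReal.coe_mul, ← EReal.coe_add,
    EReal.coe_eq_coe_iff]
  ring

theorem IsLAffOn.isExtreme_inter_preimage_Iic {r : E → EReal} (hr : IsLAffOn K r) {z : E}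
    (hz : IsMinOn r K z) : IsExtreme ℝ K (K ∩ r ⁻¹' Iic (r z)) := by
  refine ⟨inter_subset_left, fun x hx y hy w ⟨hwK, hwz⟩ ⟨a, b, ha, hb, hab, hw⟩ => ⟨hx, ?_⟩⟩
  have hw_eq : r w = r z := le_antisymm hwz (hz hwK)
  by_cases hz_top : r z = ⊤
  · simp [hz_top]
  obtain rfl : b = 1 - a := by linarith
  have hcomb := hr.2.2 x hx y hy a ha.le (by linarith)
  rw [hw, hw_eq] at hcomb
  exact EReal.le_of_mul_add_mul_le ha hb.le hab hz_top (hw_eq ▸ hr.2.1 w hwK) (hz hy) hcomb.ge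
end

section
variable {E : Type*} [AddCommGroup E] [Module ℝ E] [TopologicalSpace E]
  [IsTopologicalAddGroup E] [ContinuousSMul ℝ E] [LocallyConvexSpace ℝ E]

theorem exists_affine_le_of_notMem {C : Set (E × ℝ)} (hC_conv : Convex ℝ C)
    (hC_closed : IsClosed C) (hC_up : ∀ q ∈ C, ∀ δ : ℝ, 0 ≤ δ → q + (0, δ) ∈ C)
    {b : ℝ} (hb : ∀ q ∈ C, b ≤ q.2) {x₀ : E} {s : ℝ} (hx₀ : (x₀, s) ∉ C) :
    ∃ (φ : StrongDual ℝ E) (c : ℝ), s < φ x₀ + c ∧ ∀ q ∈ C, φ q.1 + c ≤ q.2 := by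
  rcases C.eq_empty_or_nonempty with rfl | ⟨q₀, hq₀⟩
  · exact ⟨0, s + 1, by simp, by simp⟩
  obtain ⟨F, u, hF_x₀, hF_C⟩ := geometric_hahn_banach_point_closed hC_conv hC_closed hx₀
  set ψ : StrongDual ℝ E := F.comp (.inl ℝ E ℝ)
  set β := F (0, 1)
  have hF : ∀ x t, F (x, t) = ψ x + t * β := fun x t => by
    rw [show (x, t) = (x, 0) + t • ((0 : E), (1 : ℝ)) by simp, map_add, map_smul, smul_eq_mul]
    rfl
  rw [hF] at hF_x₀
  have hβ : 0 ≤ β := by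
    by_contra! hβ
    have hq₀u := hF_C q₀ hq₀
    have := hF_C _ (hC_up q₀ hq₀ ((F q₀ - u) / -β) (div_nonneg (by linarith) (by linarith)))
    rw [map_add, hF 0, map_zero, zero_add, div_mul_eq_mul_div, div_neg,
      mul_div_cancel_right₀ _ hβ.ne] at this
    linarith
  rcases hβ.eq_or_lt with hβ_zero | hβ_pos
  -- a vertical hyperplane: tilt it steeply enough that the lower bound `b` keeps it below `C`
  · have hd : 0 < u - ψ x₀ := by rw [← hβ_zero] at hF_x₀; linarith
    set n := (|s - b| + 1) / (u - ψ x₀)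
    refine ⟨-n • ψ, b + n * u, ?_, fun q hq => ?_⟩
    · have : n * (u - ψ x₀) = |s - b| + 1 := div_mul_cancel₀ _ hd.ne'
      simp only [smul_apply, smul_eq_mul]
      linarith [le_abs_self (s - b)]
    · have hq' := hF_C q hq
      rw [← Prod.mk.eta (p := q), hF, ← hβ_zero] at hq'
      have : 0 ≤ n := by positivity
      simp only [smul_apply, smul_eq_mul]
      nlinarith [hb q hq]
  · refine ⟨-β⁻¹ • ψ, u / β, ?_, fun q hq => ?_⟩
    · simp only [smul_apply, smul_eq_mul]
      rw [← sub_pos]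
      field_simp
      linarith
    · have hq' := hF_C q hq
      rw [← Prod.mk.eta (p := q), hF] at hq'
      simp only [smul_apply, smul_eq_mul]
      rw [← sub_nonneg]
      field_simp
      linarith
end

section
variable {α : Type*} {K : Set α} {p : α → EReal}

/-- Heights are real, so that the epigraph lies in the vector space `α × ℝ`, where separation
theorems apply. -/
def realEpigraph (K : Set α) (p : α → EReal) : Set (α × ℝ) := {q | q.1 ∈ K ∧ p q.1 ≤ q.2}

theorem isClosed_realEpigraph [TopologicalSpace α] (hK : IsClosed K)
    (hp : LowerSemicontinuousOn p K) : IsClosed (realEpigraph K p) :=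
  ((lowerSemicontinuousOn_iff_isClosed_epigraph hK).1 hp).preimage
    (continuous_id.prodMap continuous_coe_real_ereal)

theorem add_mem_realEpigraph [AddZeroClass α] {q : α × ℝ} (hq : q ∈ realEpigraph K p) {δ : ℝ}
    (hδ : 0 ≤ δ) : q + (0, δ) ∈ realEpigraph K p := by
  obtain ⟨x, r⟩ := q
  refine ⟨by simpa using hq.1, ?_⟩
  simpa using hq.2.trans (EReal.coe_le_coe_iff.2 (le_add_of_nonneg_right hδ))

end

section
variable {E : Type*} [AddCommGroup E] [Module ℝ E] [TopologicalSpace E] {K : Set E}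
  {p : E → EReal}

theorem IsLAffOn.convex_realEpigraph (hp : IsLAffOn K p) (hK : Convex ℝ K) :
    Convex ℝ (realEpigraph K p) := by
  rintro ⟨x, r⟩ ⟨hx, hxr⟩ ⟨y, r'⟩ ⟨hy, hyr'⟩ a b ha hb hab
  obtain rfl : b = 1 - a := by linarith
  refine ⟨hK hx hy ha hb hab, ?_⟩
  simp only [Prod.fst_add, Prod.snd_add, Prod.smul_fst, Prod.smul_snd, smul_eq_mul]
  rw [hp.2.2 x hx y hy a ha (by linarith), EReal.coe_add, EReal.coe_mul, EReal.coe_mul]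
  gcongr

variable [IsTopologicalAddGroup E] [ContinuousSMul ℝ E] [LocallyConvexSpace ℝ E] [T2Space E]

theorem IsLAffOn.exists_affine_minorant (hp : IsLAffOn K p) (hK : IsCompact K)
    (hK_conv : Convex ℝ K) {x₀ : E} {s : ℝ} (hs : (s : EReal) < p x₀) :
    ∃ (φ : StrongDual ℝ E) (c : ℝ), s < φ x₀ + c ∧ ∀ x ∈ K, ((φ x + c : ℝ) : EReal) ≤ p x := by
  obtain ⟨b, hb⟩ := hp.1.exists_coe_le hK hp.2.1
  obtain ⟨φ, c, hs, hle⟩ := exists_affine_le_of_notMem (hp.convex_realEpigraph hK_conv)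
    (isClosed_realEpigraph hK.isClosed hp.1) (fun q hq δ hδ => add_mem_realEpigraph hq hδ)
    (b := b) (fun q hq => EReal.coe_le_coe_iff.1 ((hb q.1 hq.1).trans hq.2))
    (x₀ := x₀) (s := s) (fun h => h.2.not_gt hs)
  refine ⟨φ, c, hs, fun x hx => EReal.le_of_forall_lt_iff_le.1 fun r hr => ?_⟩
  exact EReal.coe_le_coe_iff.2 (hle (x, r) ⟨hx, hr.le⟩)

end

theorem IsCompact.convexJoin {F : Type*} [AddCommGroup F] [Module ℝ F] [TopologicalSpace F]
    [ContinuousAdd F] [ContinuousSMul ℝ F] {s t : Set F} (hs : IsCompact s) (ht : IsCompact t) :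
    IsCompact (_root_.convexJoin ℝ s t) := by
  have : _root_.convexJoin ℝ s t =
      (fun p : F × F × ℝ => (1 - p.2.2) • p.1 + p.2.2 • p.2.1) '' (s ×ˢ t ×ˢ Icc 0 1) := by
    ext z
    simp only [mem_convexJoin, segment_eq_image, mem_image, mem_prod, Prod.exists]
    aesop
  rw [this]
  exact (hs.prod (ht.prod isCompact_Icc)).image (by fun_prop)

section
variable {E : Type*} [AddCommGroup E] [Module ℝ E] {K : Set E}

theorem Convex.image_graph_affine [TopologicalSpace E] (hK : Convex ℝ K) (φ : StrongDual ℝ E)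
    (c : ℝ) : Convex ℝ ((fun x => (x, φ x + c)) '' K) := by
  rintro _ ⟨x, hx, rfl⟩ _ ⟨y, hy, rfl⟩ a b ha hb hab
  refine ⟨a • x + b • y, hK hx hy ha hb hab, ?_⟩
  ext
  · simp
  · simp only [map_add, map_smul, smul_eq_mul, Prod.snd_add, Prod.smul_snd]
    linear_combination (-c) * hab

theorem min_le_snd_of_mem_convexJoin_graph {k₁ k₂ : E → ℝ} {x₀ : E}
    (hx₀ : x₀ ∈ K.extremePoints ℝ) {q : E × ℝ}
    (hq : q ∈ convexJoin ℝ ((fun x => (x, k₁ x)) '' K) ((fun x => (x, k₂ x)) '' K))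
    (hq₁ : q.1 = x₀) : min (k₁ x₀) (k₂ x₀) ≤ q.2 := by
  obtain ⟨_, ⟨x, hx, rfl⟩, _, ⟨y, hy, rfl⟩, a, b, ha, hb, hab, rfl⟩ := mem_convexJoin.1 hq
  simp only [Prod.fst_add, Prod.smul_fst, Prod.snd_add, Prod.smul_snd, smul_eq_mul] at hq₁ ⊢
  rcases ha.eq_or_lt with rfl | ha
  · obtain rfl : b = 1 := by linarith
    simp only [zero_smul, one_smul, zero_add] at hq₁
    simp [hq₁]
  rcases hb.eq_or_lt with rfl | hb
  · obtain rfl : a = 1 := by linarith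
    simp only [zero_smul, one_smul, add_zero] at hq₁
    simp [hq₁]
  obtain ⟨hx_eq, hy_eq⟩ := (mem_extremePoints.1 hx₀).2 x hx y hy ⟨a, b, ha, hb, hab, hq₁⟩
  rw [hx_eq, hy_eq]
  calc min (k₁ x₀) (k₂ x₀) = a * min (k₁ x₀) (k₂ x₀) + b * min (k₁ x₀) (k₂ x₀) := by
        rw [← add_mul, hab, one_mul]
    _ ≤ a * k₁ x₀ + b * k₂ x₀ := by gcongr <;> simp

end

section
variable {E : Type*} [AddCommGroup E] [Module ℝ E] [TopologicalSpace E]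
  [IsTopologicalAddGroup E] [ContinuousSMul ℝ E] [LocallyConvexSpace ℝ E] [T2Space E]
  {K : Set E}

theorem exists_affine_le_min_of_mem_extremePoints (hK : IsCompact K) (hK_conv : Convex ℝ K)
    {x₀ : E} (hx₀ : x₀ ∈ K.extremePoints ℝ) (φ₁ φ₂ : StrongDual ℝ E) (c₁ c₂ : ℝ) {s : ℝ}
    (h₁ : s < φ₁ x₀ + c₁) (h₂ : s < φ₂ x₀ + c₂) :
    ∃ (φ : StrongDual ℝ E) (c : ℝ), s < φ x₀ + c ∧
      ∀ x ∈ K, φ x + c ≤ φ₁ x + c₁ ∧ φ x + c ≤ φ₂ x + c₂ := by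
  set G₁ := (fun x => (x, φ₁ x + c₁)) '' K
  set G₂ := (fun x => (x, φ₂ x + c₂)) '' K
  set J := convexJoin ℝ G₁ G₂
  set R : Set (E × ℝ) := {0} ×ˢ Ici 0
  have hJ : IsCompact J := (hK.image (by fun_prop)).convexJoin (hK.image (by fun_prop))
  have hG₁J : G₁ ⊆ J := subset_convexJoin_left ⟨_, mem_image_of_mem _ hx₀.1⟩
  have hG₂J : G₂ ⊆ J := subset_convexJoin_right ⟨_, mem_image_of_mem _ hx₀.1⟩
  obtain ⟨b, hb⟩ := (hJ.image continuous_snd).bddBelow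
  have hQ_up : ∀ q ∈ J + R, ∀ δ : ℝ, 0 ≤ δ → q + (0, δ) ∈ J + R := by
    rintro _ ⟨j, hj, v, ⟨hv₁, hv₂⟩, rfl⟩ δ hδ
    refine ⟨j, hj, v + (0, δ), ⟨by simpa using hv₁, ?_⟩, (add_assoc _ _ _).symm⟩
    exact add_nonneg hv₂ hδ
  -- over the extreme point `x₀` the set `J` only reaches down to `min (φ₁ x₀ + c₁) (φ₂ x₀ + c₂)`
  have hx₀_notMem : (x₀, s) ∉ J + R := by
    rintro ⟨j, hj, v, ⟨hv₁, hv₂⟩, hjv⟩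
    have hj₁ : j.1 = x₀ := by simpa [show v.1 = 0 from hv₁] using congrArg Prod.fst hjv
    have hjv₂ : j.2 + v.2 = s := congrArg Prod.snd hjv
    have := min_le_snd_of_mem_convexJoin_graph (k₁ := fun x => φ₁ x + c₁)
      (k₂ := fun x => φ₂ x + c₂) hx₀ hj hj₁
    simp only [mem_Ici] at hv₂
    linarith [lt_min h₁ h₂]
  obtain ⟨φ, c, hs, hle⟩ := exists_affine_le_of_notMem
    ((hK_conv.image_graph_affine φ₁ c₁).convexJoin (hK_conv.image_graph_affine φ₂ c₂) |>.add
      ((convex_singleton 0).prod (convex_Ici 0)))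
    ((isClosed_singleton.prod isClosed_Ici).add_left_of_isCompact hJ) hQ_up
    (b := b) (by
      rintro _ ⟨j, hj, v, ⟨-, hv₂⟩, rfl⟩
      show b ≤ j.2 + v.2
      linarith [hb (mem_image_of_mem Prod.snd hj), show (0 : ℝ) ≤ v.2 from hv₂])
    hx₀_notMem
  refine ⟨φ, c, hs, fun x hx => ⟨?_, ?_⟩⟩
  · simpa using hle _ ⟨_, hG₁J (mem_image_of_mem _ hx), 0, ⟨rfl, self_mem_Ici⟩, add_zero _⟩
  · simpa using hle _ ⟨_, hG₂J (mem_image_of_mem _ hx), 0, ⟨rfl, self_mem_Ici⟩, add_zero _⟩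

theorem IsLAffOn.exists_mem_extremePoints_isMinOn {r : E → EReal} (hr : IsLAffOn K r)
    (hK : IsCompact K) (hne : K.Nonempty) : ∃ z ∈ K.extremePoints ℝ, IsMinOn r K z := by
  obtain ⟨y, hy, hmin⟩ := hr.1.exists_isMinOn hne hK
  have hface := hr.isExtreme_inter_preimage_Iic hmin
  obtain ⟨z, hz⟩ := (hr.1.isCompact_inter_preimage_Iic hK (r y)).extremePoints_nonempty
    ⟨y, hy, le_refl (r y)⟩
  exact ⟨z, hface.extremePoints_subset_extremePoints hz,
    isMinOn_iff.2 fun w hw => hz.1.2.trans (hmin hw)⟩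

theorem IsLAffOn.le_of_forall_mem_extremePoints {u v : E → EReal} (hu : IsLAffOn K u)
    (hv : IsLAffOn K v) (hK : IsCompact K) (hK_conv : Convex ℝ K)
    (h : ∀ z ∈ K.extremePoints ℝ, u z ≤ v z) : ∀ x ∈ K, u x ≤ v x := by
  intro x hx
  refine EReal.ge_of_forall_gt_iff_ge.1 fun s hs => ?_
  obtain ⟨φ, c, hsx, hφu⟩ := hu.exists_affine_minorant hK hK_conv hs
  -- `v - (φ + c)` is nonnegative at the extreme points, hence everywhere by Bauer's principle
  obtain ⟨z, hz, hmin⟩ :=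
    (hv.add (isLAffOn_coe_add_const (-φ) (-c))).exists_mem_extremePoints_isMinOn hK ⟨x, hx⟩
  have hnonneg (y : E) :
      0 ≤ v y + (((-φ) y + -c : ℝ) : EReal) ↔ ((φ y + c : ℝ) : EReal) ≤ v y := by
    rw [neg_apply, ← neg_add, EReal.coe_neg, ← sub_eq_add_neg,
      EReal.sub_nonneg (.inr (EReal.coe_ne_top _)) (.inr (EReal.coe_ne_bot _))]
  have hz_nonneg := (hnonneg z).2 ((hφu z hz.1).trans (h z hz))
  exact (EReal.coe_le_coe_iff.2 hsx.le).trans ((hnonneg x).1 (hz_nonneg.trans (hmin hx)))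

theorem IsLAffInf.min_le_of_mem_extremePoints {g h m : E → EReal} (hm : IsLAffInf K g h m)
    (hg : IsLAffOn K g) (hh : IsLAffOn K h) (hK : IsCompact K) (hK_conv : Convex ℝ K) {x₀ : E}
    (hx₀ : x₀ ∈ K.extremePoints ℝ) : min (g x₀) (h x₀) ≤ m x₀ := by
  refine EReal.ge_of_forall_gt_iff_ge.1 fun s hs => ?_
  obtain ⟨φ₁, c₁, hs₁, hφ₁⟩ := hg.exists_affine_minorant hK hK_conv (lt_min_iff.1 hs).1
  obtain ⟨φ₂, c₂, hs₂, hφ₂⟩ := hh.exists_affine_minorant hK hK_conv (lt_min_iff.1 hs).2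
  obtain ⟨φ, c, hs, hφ⟩ :=
    exists_affine_le_min_of_mem_extremePoints hK hK_conv hx₀ φ₁ φ₂ c₁ c₂ hs₁ hs₂
  have hφm := hm.2.2.2 _ (isLAffOn_coe_add_const φ c)
    (fun x hx => (EReal.coe_le_coe_iff.2 (hφ x hx).1).trans (hφ₁ x hx))
    (fun x hx => (EReal.coe_le_coe_iff.2 (hφ x hx).2).trans (hφ₂ x hx)) x₀ hx₀.1
  exact (EReal.coe_le_coe_iff.2 hs.le).trans hφm

end

/-- In `LAff(K)` on a compact convex set `K` (assumed to be an
inf-semilattice, witnessed here by the two given infima), addition distributes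
over infima: `f + (g ∧ h) = (f + g) ∧ (f + h)`. -/
theorem laff_add_distrib_inf {E : Type*} [AddCommGroup E] [Module ℝ E]
    [TopologicalSpace E] [IsTopologicalAddGroup E] [ContinuousSMul ℝ E]
    [T2Space E] [LocallyConvexSpace ℝ E]
    (K : Set E) (hKcpt : IsCompact K) (hKcvx : Convex ℝ K)
    (f g h m m' : E → EReal)
    (hf : IsLAffOn K f) (hg : IsLAffOn K g) (hh : IsLAffOn K h)
    (hm : IsLAffInf K g h m)
    (hm' : IsLAffInf K (fun x => f x + g x) (fun x => f x + h x) m') :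
    ∀ x ∈ K, f x + m x = m' x := by
  have hfm : IsLAffOn K fun x => f x + m x := hf.add hm.1
  intro x hx
  refine le_antisymm (hm'.2.2.2 _ hfm (fun y hy => add_le_add_right (hm.2.1 y hy) _)
    (fun y hy => add_le_add_right (hm.2.2.1 y hy) _) x hx) ?_
  refine hm'.1.le_of_forall_mem_extremePoints hfm hKcpt hKcvx (fun z hz => ?_) x hx
  rcases min_le_iff.1 (hm.min_le_of_mem_extremePoints hg hh hKcpt hKcvx hz) with hgm | hhm
  · exact (hm'.2.1 z hz.1).trans (add_le_add_right hgm _)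
  · exact (hm'.2.2.1 z hz.1).trans (add_le_add_right hhm _)
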